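/- Let f : (0,∞) → ℝ be infinitely differentiable with f(x) > 0 for all x > 0, f(1) = 1, and f(x) = x·f(1/x) for all x > 0, and let r be the scalar-curvature function of f. Then, as a → 0, r(a) = (6 + 36·f″(1)) + a²·( (100/3)·f⁽⁴⁾(1) − 140·f″(1) − 120·f″(1)² ) + a⁴·( 352·f″(1)³ + 616·f″(1)² + 1092·f″(1) − (1288/3)·f⁽⁴⁾(1) + (392/45)·f⁽⁶⁾(1) − 160·f″(1)·f⁽⁴⁾(1) ) + O(a⁶). -/

import Mathlib

set_option maxHeartbeats 4000000
set_option maxRecDepth 100000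


open Filter Topology Asymptotics

/-- The scalar-curvature function `r(a)` of the monotone metric on `2×2` density
matrices induced by `f`, at the state with eigenvalues `(1±a)/2`;
here `c = (1−a)/(1+a)`. -/
noncomputable def scurv (f : ℝ → ℝ) (a : ℝ) : ℝ :=
  14*(a - 1) * (deriv f ((1-a)/(1+a)))^2 / ((1+a)^3 * (f ((1-a)/(1+a)))^2)
    + 2*(a^2 + 7*a - 6) * deriv f ((1-a)/(1+a)) / ((1+a)^2 * a * f ((1-a)/(1+a)))
    + 8*(1 - a) * iteratedDeriv 2 f ((1-a)/(1+a)) / ((1+a)^3 * f ((1-a)/(1+a)))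
    + 2*(1+a) * f ((1-a)/(1+a)) / a^2
    + (3*a^3 + 5*a^2 + 8*a - 4) / (2*(1+a)*a^2)

section Aux

noncomputable def uf (f : ℝ → ℝ) (j : ℕ) (a : ℝ) : ℝ := iteratedDeriv j f ((1-a)/(1+a))

noncomputable def Gf (f : ℝ → ℝ) (a : ℝ) : ℝ := (1+a) * uf f 0 a

noncomputable def G1f (f : ℝ → ℝ) (a : ℝ) : ℝ := (1) * uf f 0 a / (1+a)^0 + (-2) * uf f 1 a / (1+a)^1
noncomputable def G2f (f : ℝ → ℝ) (a : ℝ) : ℝ := (4) * uf f 2 a / (1+a)^3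
noncomputable def G3f (f : ℝ → ℝ) (a : ℝ) : ℝ := (-12) * uf f 2 a / (1+a)^4 + (-8) * uf f 3 a / (1+a)^5
noncomputable def G4f (f : ℝ → ℝ) (a : ℝ) : ℝ := (48) * uf f 2 a / (1+a)^5 + (64) * uf f 3 a / (1+a)^6 + (16) * uf f 4 a / (1+a)^7
noncomputable def G5f (f : ℝ → ℝ) (a : ℝ) : ℝ := (-240) * uf f 2 a / (1+a)^6 + (-480) * uf f 3 a / (1+a)^7 + (-240) * uf f 4 a / (1+a)^8 + (-32) * uf f 5 a / (1+a)^9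
noncomputable def G6f (f : ℝ → ℝ) (a : ℝ) : ℝ := (1440) * uf f 2 a / (1+a)^7 + (3840) * uf f 3 a / (1+a)^8 + (2880) * uf f 4 a / (1+a)^9 + (768) * uf f 5 a / (1+a)^10 + (64) * uf f 6 a / (1+a)^11
noncomputable def G7f (f : ℝ → ℝ) (a : ℝ) : ℝ := (-10080) * uf f 2 a / (1+a)^8 + (-33600) * uf f 3 a / (1+a)^9 + (-33600) * uf f 4 a / (1+a)^10 + (-13440) * uf f 5 a / (1+a)^11 + (-2240) * uf f 6 a / (1+a)^12 + (-128) * uf f 7 a / (1+a)^13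
noncomputable def G8f (f : ℝ → ℝ) (a : ℝ) : ℝ := (80640) * uf f 2 a / (1+a)^9 + (322560) * uf f 3 a / (1+a)^10 + (403200) * uf f 4 a / (1+a)^11 + (215040) * uf f 5 a / (1+a)^12 + (53760) * uf f 6 a / (1+a)^13 + (6144) * uf f 7 a / (1+a)^14 + (256) * uf f 8 a / (1+a)^15
noncomputable def G9f (f : ℝ → ℝ) (a : ℝ) : ℝ := (-725760) * uf f 2 a / (1+a)^10 + (-3386880) * uf f 3 a / (1+a)^11 + (-5080320) * uf f 4 a / (1+a)^12 + (-3386880) * uf f 5 a / (1+a)^13 + (-1128960) * uf f 6 a / (1+a)^14 + (-193536) * uf f 7 a / (1+a)^15 + (-16128) * uf f 8 a / (1+a)^16 + (-512) * uf f 9 a / (1+a)^17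

noncomputable def T0f (f : ℝ → ℝ) (a : ℝ) : ℝ := ((1 : ℝ)) + ((0 : ℝ)) * a^1 + ((2 : ℝ) * (iteratedDeriv 2 f 1)) * a^2 + ((0 : ℝ)) * a^3 + ((2/3 : ℝ) * (iteratedDeriv 4 f 1) + (-2 : ℝ) * (iteratedDeriv 2 f 1)) * a^4 + ((0 : ℝ)) * a^5 + ((4/45 : ℝ) * (iteratedDeriv 6 f 1) + (-4 : ℝ) * (iteratedDeriv 4 f 1) + (10 : ℝ) * (iteratedDeriv 2 f 1)) * a^6 + ((0 : ℝ)) * a^7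
noncomputable def T1f (f : ℝ → ℝ) (a : ℝ) : ℝ := ((0 : ℝ)) + ((4 : ℝ) * (iteratedDeriv 2 f 1)) * a^1 + ((0 : ℝ)) * a^2 + ((8/3 : ℝ) * (iteratedDeriv 4 f 1) + (-8 : ℝ) * (iteratedDeriv 2 f 1)) * a^3 + ((0 : ℝ)) * a^4 + ((8/15 : ℝ) * (iteratedDeriv 6 f 1) + (-24 : ℝ) * (iteratedDeriv 4 f 1) + (60 : ℝ) * (iteratedDeriv 2 f 1)) * a^5 + ((0 : ℝ)) * a^6 + ((0 : ℝ)) * a^7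
noncomputable def T2f (f : ℝ → ℝ) (a : ℝ) : ℝ := ((4 : ℝ) * (iteratedDeriv 2 f 1)) + ((0 : ℝ)) * a^1 + ((8 : ℝ) * (iteratedDeriv 4 f 1) + (-24 : ℝ) * (iteratedDeriv 2 f 1)) * a^2 + ((0 : ℝ)) * a^3 + ((8/3 : ℝ) * (iteratedDeriv 6 f 1) + (-120 : ℝ) * (iteratedDeriv 4 f 1) + (300 : ℝ) * (iteratedDeriv 2 f 1)) * a^4 + ((0 : ℝ)) * a^5 + ((0 : ℝ)) * a^6 + ((0 : ℝ)) * a^7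
noncomputable def T3f (f : ℝ → ℝ) (a : ℝ) : ℝ := ((0 : ℝ)) + ((16 : ℝ) * (iteratedDeriv 4 f 1) + (-48 : ℝ) * (iteratedDeriv 2 f 1)) * a^1 + ((0 : ℝ)) * a^2 + ((32/3 : ℝ) * (iteratedDeriv 6 f 1) + (-480 : ℝ) * (iteratedDeriv 4 f 1) + (1200 : ℝ) * (iteratedDeriv 2 f 1)) * a^3 + ((0 : ℝ)) * a^4 + ((0 : ℝ)) * a^5 + ((0 : ℝ)) * a^6 + ((0 : ℝ)) * a^7
noncomputable def T4f (f : ℝ → ℝ) (a : ℝ) : ℝ := ((16 : ℝ) * (iteratedDeriv 4 f 1) + (-48 : ℝ) * (iteratedDeriv 2 f 1)) + ((0 : ℝ)) * a^1 + ((32 : ℝ) * (iteratedDeriv 6 f 1) + (-1440 : ℝ) * (iteratedDeriv 4 f 1) + (3600 : ℝ) * (iteratedDeriv 2 f 1)) * a^2 + ((0 : ℝ)) * a^3 + ((0 : ℝ)) * a^4 + ((0 : ℝ)) * a^5 + ((0 : ℝ)) * a^6 + ((0 : ℝ)) * a^7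
noncomputable def T5f (f : ℝ → ℝ) (a : ℝ) : ℝ := ((0 : ℝ)) + ((64 : ℝ) * (iteratedDeriv 6 f 1) + (-2880 : ℝ) * (iteratedDeriv 4 f 1) + (7200 : ℝ) * (iteratedDeriv 2 f 1)) * a^1 + ((0 : ℝ)) * a^2 + ((0 : ℝ)) * a^3 + ((0 : ℝ)) * a^4 + ((0 : ℝ)) * a^5 + ((0 : ℝ)) * a^6 + ((0 : ℝ)) * a^7
noncomputable def T6f (f : ℝ → ℝ) (a : ℝ) : ℝ := ((64 : ℝ) * (iteratedDeriv 6 f 1) + (-2880 : ℝ) * (iteratedDeriv 4 f 1) + (7200 : ℝ) * (iteratedDeriv 2 f 1)) + ((0 : ℝ)) * a^1 + ((0 : ℝ)) * a^2 + ((0 : ℝ)) * a^3 + ((0 : ℝ)) * a^4 + ((0 : ℝ)) * a^5 + ((0 : ℝ)) * a^6 + ((0 : ℝ)) * a^7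

noncomputable def R0f (f : ℝ → ℝ) (a : ℝ) : ℝ := Gf f a - T0f f a
noncomputable def R1f (f : ℝ → ℝ) (a : ℝ) : ℝ := G1f f a - T1f f a
noncomputable def R2f (f : ℝ → ℝ) (a : ℝ) : ℝ := G2f f a - T2f f a
noncomputable def R3f (f : ℝ → ℝ) (a : ℝ) : ℝ := G3f f a - T3f f a
noncomputable def R4f (f : ℝ → ℝ) (a : ℝ) : ℝ := G4f f a - T4f f a
noncomputable def R5f (f : ℝ → ℝ) (a : ℝ) : ℝ := G5f f a - T5f f a
noncomputable def R6f (f : ℝ → ℝ) (a : ℝ) : ℝ := G6f f a - T6f f a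
noncomputable def R7f (f : ℝ → ℝ) (a : ℝ) : ℝ := G7f f a

noncomputable def Pf (f : ℝ → ℝ) (a : ℝ) : ℝ :=
  (6 + 36 * iteratedDeriv 2 f 1)
    + a^2 * ((100/3) * iteratedDeriv 4 f 1 - 140 * iteratedDeriv 2 f 1
        - 120 * (iteratedDeriv 2 f 1)^2)
    + a^4 * (352 * (iteratedDeriv 2 f 1)^3 + 616 * (iteratedDeriv 2 f 1)^2
        + 1092 * iteratedDeriv 2 f 1 - (1288/3) * iteratedDeriv 4 f 1
        + (392/45) * iteratedDeriv 6 f 1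
        - 160 * iteratedDeriv 2 f 1 * iteratedDeriv 4 f 1)

noncomputable def PSf (f : ℝ → ℝ) (a : ℝ) : ℝ :=
  7*a^2*(a-1)*(Gf f a-(1+a)*G1f f a)^2
    + 2*a*(a^2+7*a-6)*(Gf f a)*(Gf f a-(1+a)*G1f f a)
    + 4*a^2*(1-a)*(1+a)^2*(G2f f a)*(Gf f a)
    + 4*(1+a)*(Gf f a)^3 + (3*a^3+5*a^2+8*a-4)*(Gf f a)^2
    - 2*a^2*(1+a)*(Gf f a)^2*(Pf f a)

noncomputable def Qf (f : ℝ → ℝ) (a : ℝ) : ℝ := (-96/5 : ℝ) * (iteratedDeriv 6 f 1) + (864 : ℝ) * (iteratedDeriv 4 f 1) + (-832/9 : ℝ) * (iteratedDeriv 4 f 1)^2 + (-2160 : ℝ) * (iteratedDeriv 2 f 1) + (-3136/45 : ℝ) * (iteratedDeriv 2 f 1) * (iteratedDeriv 6 f 1) + (12128/3 : ℝ) * (iteratedDeriv 2 f 1) * (iteratedDeriv 4 f 1) + (-9728 : ℝ) * (iteratedDeriv 2 f 1)^2 + (3520/3 : ℝ) * (iteratedDeriv 2 f 1)^2 * (iteratedDeriv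 4 f 1) + (-4288 : ℝ) * (iteratedDeriv 2 f 1)^3 + (-1856 : ℝ) * (iteratedDeriv 2 f 1)^4 + (-96/5 : ℝ) * a * (iteratedDeriv 6 f 1) + (864 : ℝ) * a * (iteratedDeriv 4 f 1) + (-832/9 : ℝ) * a * (iteratedDeriv 4 f 1)^2 + (-2160 : ℝ) * a * (iteratedDeriv 2 f 1) + (-3136/45 : ℝ) * a * (iteratedDeriv 2 f 1) * (iteratedDeriv 6 f 1) + (12128/3 : ℝ) * a * (iteratedDeriv 2 f 1) * (iteratedDeriv 4 f 1) + (-9728 : ℝ) * a * (iteratedDeriv 2 f 1)^2 + (3520/3 : ℝ) * a * (iteratedDeriv 2 f 1)^2 * (iteratedDeriv 4 f 1) + (-4288 : ℝ) * a * (iteratedDeriv 2 f 1)^3 + (-1856 : ℝ) * a * (iteratedDeriv 2 f 1)^4 + (-1664/45 : ℝ) * a^2 * (iteratedDeriv 4 f 1) * (iteratedDeriv 6 f 1) + (15872/9 : ℝ) * a^2 * (iteratedDeriv 4 f 1)^2 + (4928/45 : ℝ) * a^2 * (iteratedDeriv 2 f 1) * (iteratedDeriv 6 f 1) + (-29056/3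 : ℝ) * a^2 * (iteratedDeriv 2 f 1) * (iteratedDeriv 4 f 1) + (2048/9 : ℝ) * a^2 * (iteratedDeriv 2 f 1) * (iteratedDeriv 4 f 1)^2 + (13216 : ℝ) * a^2 * (iteratedDeriv 2 f 1)^2 + (-2176/45 : ℝ) * a^2 * (iteratedDeriv 2 f 1)^2 * (iteratedDeriv 6 f 1) + (960 : ℝ) * a^2 * (iteratedDeriv 2 f 1)^2 * (iteratedDeriv 4 f 1) + (-3840 : ℝ) * a^2 * (iteratedDeriv 2 f 1)^3 + (2944/3 : ℝ) * a^2 * (iteratedDeriv 2 f 1)^3 * (iteratedDeriv 4 f 1) + (-4032 : ℝ) * a^2 * (iteratedDeriv 2 f 1)^4 + (-2816 : ℝ) * a^2 * (iteratedDeriv 2 f 1)^5 + (-1664/45 : ℝ) * a^3 * (iteratedDeriv 4 f 1) * (iteratedDeriv 6 f 1) + (15872/9 : ℝ) * a^3 * (iteratedDeriv 4 f 1)^2 + (4928/45 : ℝ) * a^3 * (iteratedDeriv 2 f 1) * (iteratedDeriv 6 f 1) + (-29056/3 : ℝ) * a^3 * (iteratedDeriv 2 f 1) * (iteratedDeriv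 4 f 1) + (2048/9 : ℝ) * a^3 * (iteratedDeriv 2 f 1) * (iteratedDeriv 4 f 1)^2 + (13216 : ℝ) * a^3 * (iteratedDeriv 2 f 1)^2 + (-2176/45 : ℝ) * a^3 * (iteratedDeriv 2 f 1)^2 * (iteratedDeriv 6 f 1) + (960 : ℝ) * a^3 * (iteratedDeriv 2 f 1)^2 * (iteratedDeriv 4 f 1) + (-3840 : ℝ) * a^3 * (iteratedDeriv 2 f 1)^3 + (2944/3 : ℝ) * a^3 * (iteratedDeriv 2 f 1)^3 * (iteratedDeriv 4 f 1) + (-4032 : ℝ) * a^3 * (iteratedDeriv 2 f 1)^4 + (-2816 : ℝ) * a^3 * (iteratedDeriv 2 f 1)^5 + (-2368/675 : ℝ) * a^4 * (iteratedDeriv 6 f 1)^2 + (8896/27 : ℝ) * a^4 * (iteratedDeriv 4 f 1) * (iteratedDeriv 6 f 1) + (-23168/3 : ℝ) * a^4 * (iteratedDeriv 4 f 1)^2 + (-256/9 : ℝ) * a^4 * (iteratedDeriv 4 f 1)^3 + (-37376/45 : ℝ) * a^4 * (iteratedDeriv 2 f 1) * (iteratedDeriv 6 f 1) + (116768/3 :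 ℝ) * a^4 * (iteratedDeriv 2 f 1) * (iteratedDeriv 4 f 1) + (-512/27 : ℝ) * a^4 * (iteratedDeriv 2 f 1) * (iteratedDeriv 4 f 1) * (iteratedDeriv 6 f 1) + (1344 : ℝ) * a^4 * (iteratedDeriv 2 f 1) * (iteratedDeriv 4 f 1)^2 + (-49040 : ℝ) * a^4 * (iteratedDeriv 2 f 1)^2 + (1664/45 : ℝ) * a^4 * (iteratedDeriv 2 f 1)^2 * (iteratedDeriv 6 f 1) + (-17920/3 : ℝ) * a^4 * (iteratedDeriv 2 f 1)^2 * (iteratedDeriv 4 f 1) + (960 : ℝ) * a^4 * (iteratedDeriv 2 f 1)^2 * (iteratedDeriv 4 f 1)^2 + (7040 : ℝ) * a^4 * (iteratedDeriv 2 f 1)^3 + (-1792/45 : ℝ) * a^4 * (iteratedDeriv 2 f 1)^3 * (iteratedDeriv 6 f 1) + (-14080/3 : ℝ) * a^4 * (iteratedDeriv 2 f 1)^3 * (iteratedDeriv 4 f 1) + (6336 : ℝ) * a^4 * (iteratedDeriv 2 f 1)^4 + (-5632/3 : ℝ) * a^4 * (iteratedDeriv 2 f 1)^4 * (iteratedDeriv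 4 f 1) + (5632 : ℝ) * a^4 * (iteratedDeriv 2 f 1)^5 + (-2368/675 : ℝ) * a^5 * (iteratedDeriv 6 f 1)^2 + (8896/27 : ℝ) * a^5 * (iteratedDeriv 4 f 1) * (iteratedDeriv 6 f 1) + (-23168/3 : ℝ) * a^5 * (iteratedDeriv 4 f 1)^2 + (-256/9 : ℝ) * a^5 * (iteratedDeriv 4 f 1)^3 + (-37376/45 : ℝ) * a^5 * (iteratedDeriv 2 f 1) * (iteratedDeriv 6 f 1) + (116768/3 : ℝ) * a^5 * (iteratedDeriv 2 f 1) * (iteratedDeriv 4 f 1) + (-512/27 : ℝ) * a^5 * (iteratedDeriv 2 f 1) * (iteratedDeriv 4 f 1) * (iteratedDeriv 6 f 1) + (1344 : ℝ) * a^5 * (iteratedDeriv 2 f 1) * (iteratedDeriv 4 f 1)^2 + (-49040 : ℝ) * a^5 * (iteratedDeriv 2 f 1)^2 + (1664/45 : ℝ) * a^5 * (iteratedDeriv 2 f 1)^2 * (iteratedDeriv 6 f 1) + (-17920/3 : ℝ) * a^5 * (iteratedDeriv 2 f 1)^2 * (iteratedDeriv 4 f 1) + (960 : ℝ) * a^5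 * (iteratedDeriv 2 f 1)^2 * (iteratedDeriv 4 f 1)^2 + (7040 : ℝ) * a^5 * (iteratedDeriv 2 f 1)^3 + (-1792/45 : ℝ) * a^5 * (iteratedDeriv 2 f 1)^3 * (iteratedDeriv 6 f 1) + (-14080/3 : ℝ) * a^5 * (iteratedDeriv 2 f 1)^3 * (iteratedDeriv 4 f 1) + (6336 : ℝ) * a^5 * (iteratedDeriv 2 f 1)^4 + (-5632/3 : ℝ) * a^5 * (iteratedDeriv 2 f 1)^4 * (iteratedDeriv 4 f 1) + (5632 : ℝ) * a^5 * (iteratedDeriv 2 f 1)^5 + (64/225 : ℝ) * a^6 * (iteratedDeriv 6 f 1)^2 + (-128/5 : ℝ) * a^6 * (iteratedDeriv 4 f 1) * (iteratedDeriv 6 f 1) + (576 : ℝ) * a^6 * (iteratedDeriv 4 f 1)^2 + (-2048/135 : ℝ) * a^6 * (iteratedDeriv 4 f 1)^2 * (iteratedDeriv 6 f 1) + (19328/27 : ℝ) * a^6 * (iteratedDeriv 4 f 1)^3 + (64 : ℝ) * a^6 * (iteratedDeriv 2 f 1) * (iteratedDeriv 6 f 1) + (-13312/2025 : ℝ) *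 a^6 * (iteratedDeriv 2 f 1) * (iteratedDeriv 6 f 1)^2 + (-2880 : ℝ) * a^6 * (iteratedDeriv 2 f 1) * (iteratedDeriv 4 f 1) + (97024/135 : ℝ) * a^6 * (iteratedDeriv 2 f 1) * (iteratedDeriv 4 f 1) * (iteratedDeriv 6 f 1) + (-63104/3 : ℝ) * a^6 * (iteratedDeriv 2 f 1) * (iteratedDeriv 4 f 1)^2 + (1280/9 : ℝ) * a^6 * (iteratedDeriv 2 f 1) * (iteratedDeriv 4 f 1)^3 + (3600 : ℝ) * a^6 * (iteratedDeriv 2 f 1)^2 + (-25856/15 : ℝ) * a^6 * (iteratedDeriv 2 f 1)^2 * (iteratedDeriv 6 f 1) + (278272/3 : ℝ) * a^6 * (iteratedDeriv 2 f 1)^2 * (iteratedDeriv 4 f 1) + (1280/9 : ℝ) * a^6 * (iteratedDeriv 2 f 1)^2 * (iteratedDeriv 4 f 1) * (iteratedDeriv 6 f 1) + (-70208/9 : ℝ) * a^6 * (iteratedDeriv 2 f 1)^2 * (iteratedDeriv 4 f 1)^2 + (-111616 : ℝ) * a^6 * (iteratedDeriv 2 f 1)^3 + (-23552/45 : ℝ)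 * a^6 * (iteratedDeriv 2 f 1)^3 * (iteratedDeriv 6 f 1) + (132352/3 : ℝ) * a^6 * (iteratedDeriv 2 f 1)^3 * (iteratedDeriv 4 f 1) + (-2816/9 : ℝ) * a^6 * (iteratedDeriv 2 f 1)^3 * (iteratedDeriv 4 f 1)^2 + (-63808 : ℝ) * a^6 * (iteratedDeriv 2 f 1)^4 + (-11264/45 : ℝ) * a^6 * (iteratedDeriv 2 f 1)^4 * (iteratedDeriv 6 f 1) + (39424/3 : ℝ) * a^6 * (iteratedDeriv 2 f 1)^4 * (iteratedDeriv 4 f 1) + (-30976 : ℝ) * a^6 * (iteratedDeriv 2 f 1)^5 + (64/225 : ℝ) * a^7 * (iteratedDeriv 6 f 1)^2 + (-128/5 : ℝ) * a^7 * (iteratedDeriv 4 f 1) * (iteratedDeriv 6 f 1) + (576 : ℝ) * a^7 * (iteratedDeriv 4 f 1)^2 + (-2048/135 : ℝ) * a^7 * (iteratedDeriv 4 f 1)^2 * (iteratedDeriv 6 f 1) + (19328/27 : ℝ) * a^7 * (iteratedDeriv 4 f 1)^3 + (64 : ℝ) * a^7 * (iteratedDeriv 2 f 1) * (iteratedDeriv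 6 f 1) + (-13312/2025 : ℝ) * a^7 * (iteratedDeriv 2 f 1) * (iteratedDeriv 6 f 1)^2 + (-2880 : ℝ) * a^7 * (iteratedDeriv 2 f 1) * (iteratedDeriv 4 f 1) + (97024/135 : ℝ) * a^7 * (iteratedDeriv 2 f 1) * (iteratedDeriv 4 f 1) * (iteratedDeriv 6 f 1) + (-63104/3 : ℝ) * a^7 * (iteratedDeriv 2 f 1) * (iteratedDeriv 4 f 1)^2 + (1280/9 : ℝ) * a^7 * (iteratedDeriv 2 f 1) * (iteratedDeriv 4 f 1)^3 + (3600 : ℝ) * a^7 * (iteratedDeriv 2 f 1)^2 + (-25856/15 : ℝ) * a^7 * (iteratedDeriv 2 f 1)^2 * (iteratedDeriv 6 f 1) + (278272/3 : ℝ) * a^7 * (iteratedDeriv 2 f 1)^2 * (iteratedDeriv 4 f 1) + (1280/9 : ℝ) * a^7 * (iteratedDeriv 2 f 1)^2 * (iteratedDeriv 4 f 1) * (iteratedDeriv 6 f 1) + (-70208/9 : ℝ) * a^7 * (iteratedDeriv 2 f 1)^2 * (iteratedDeriv 4 f 1)^2 + (-111616 : ℝ) * a^7 * (iteratedDeriv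 2 f 1)^3 + (-23552/45 : ℝ) * a^7 * (iteratedDeriv 2 f 1)^3 * (iteratedDeriv 6 f 1) + (132352/3 : ℝ) * a^7 * (iteratedDeriv 2 f 1)^3 * (iteratedDeriv 4 f 1) + (-2816/9 : ℝ) * a^7 * (iteratedDeriv 2 f 1)^3 * (iteratedDeriv 4 f 1)^2 + (-63808 : ℝ) * a^7 * (iteratedDeriv 2 f 1)^4 + (-11264/45 : ℝ) * a^7 * (iteratedDeriv 2 f 1)^4 * (iteratedDeriv 6 f 1) + (39424/3 : ℝ) * a^7 * (iteratedDeriv 2 f 1)^4 * (iteratedDeriv 4 f 1) + (-30976 : ℝ) * a^7 * (iteratedDeriv 2 f 1)^5 + (-1024/405 : ℝ) * a^8 * (iteratedDeriv 4 f 1) * (iteratedDeriv 6 f 1)^2 + (95744/405 : ℝ) * a^8 * (iteratedDeriv 4 f 1)^2 * (iteratedDeriv 6 f 1) + (-49664/9 : ℝ) * a^8 * (iteratedDeriv 4 f 1)^3 + (3328/405 : ℝ) * a^8 * (iteratedDeriv 2 f 1) * (iteratedDeriv 6 f 1)^2 + (-183808/135 : ℝ) * a^8 * (iteratedDeriv 2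 f 1) * (iteratedDeriv 4 f 1) * (iteratedDeriv 6 f 1) + (410624/9 : ℝ) * a^8 * (iteratedDeriv 2 f 1) * (iteratedDeriv 4 f 1)^2 + (1024/27 : ℝ) * a^8 * (iteratedDeriv 2 f 1) * (iteratedDeriv 4 f 1)^2 * (iteratedDeriv 6 f 1) + (-5120/3 : ℝ) * a^8 * (iteratedDeriv 2 f 1) * (iteratedDeriv 4 f 1)^3 + (28928/15 : ℝ) * a^8 * (iteratedDeriv 2 f 1)^2 * (iteratedDeriv 6 f 1) + (256/135 : ℝ) * a^8 * (iteratedDeriv 2 f 1)^2 * (iteratedDeriv 6 f 1)^2 + (-374272/3 : ℝ) * a^8 * (iteratedDeriv 2 f 1)^2 * (iteratedDeriv 4 f 1) + (-58112/135 : ℝ) * a^8 * (iteratedDeriv 2 f 1)^2 * (iteratedDeriv 4 f 1) * (iteratedDeriv 6 f 1) + (59392/3 : ℝ) * a^8 * (iteratedDeriv 2 f 1)^2 * (iteratedDeriv 4 f 1)^2 + (112960 : ℝ) * a^8 * (iteratedDeriv 2 f 1)^3 + (38912/45 : ℝ) * a^8 * (iteratedDeriv 2 f 1)^3 * (iteratedDeriv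 6 f 1) + (-204416/3 : ℝ) * a^8 * (iteratedDeriv 2 f 1)^3 * (iteratedDeriv 4 f 1) + (-11264/135 : ℝ) * a^8 * (iteratedDeriv 2 f 1)^3 * (iteratedDeriv 4 f 1) * (iteratedDeriv 6 f 1) + (11264/3 : ℝ) * a^8 * (iteratedDeriv 2 f 1)^3 * (iteratedDeriv 4 f 1)^2 + (73280 : ℝ) * a^8 * (iteratedDeriv 2 f 1)^4 + (11264/45 : ℝ) * a^8 * (iteratedDeriv 2 f 1)^4 * (iteratedDeriv 6 f 1) + (-61952/3 : ℝ) * a^8 * (iteratedDeriv 2 f 1)^4 * (iteratedDeriv 4 f 1) + (28160 : ℝ) * a^8 * (iteratedDeriv 2 f 1)^5 + (-1024/405 : ℝ) * a^9 * (iteratedDeriv 4 f 1) * (iteratedDeriv 6 f 1)^2 + (95744/405 : ℝ) * a^9 * (iteratedDeriv 4 f 1)^2 * (iteratedDeriv 6 f 1) + (-49664/9 : ℝ) * a^9 * (iteratedDeriv 4 f 1)^3 + (3328/405 : ℝ) * a^9 * (iteratedDeriv 2 f 1) * (iteratedDeriv 6 f 1)^2 + (-183808/135 : ℝ) * a^9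 * (iteratedDeriv 2 f 1) * (iteratedDeriv 4 f 1) * (iteratedDeriv 6 f 1) + (410624/9 : ℝ) * a^9 * (iteratedDeriv 2 f 1) * (iteratedDeriv 4 f 1)^2 + (1024/27 : ℝ) * a^9 * (iteratedDeriv 2 f 1) * (iteratedDeriv 4 f 1)^2 * (iteratedDeriv 6 f 1) + (-5120/3 : ℝ) * a^9 * (iteratedDeriv 2 f 1) * (iteratedDeriv 4 f 1)^3 + (28928/15 : ℝ) * a^9 * (iteratedDeriv 2 f 1)^2 * (iteratedDeriv 6 f 1) + (256/135 : ℝ) * a^9 * (iteratedDeriv 2 f 1)^2 * (iteratedDeriv 6 f 1)^2 + (-374272/3 : ℝ) * a^9 * (iteratedDeriv 2 f 1)^2 * (iteratedDeriv 4 f 1) + (-58112/135 : ℝ) * a^9 * (iteratedDeriv 2 f 1)^2 * (iteratedDeriv 4 f 1) * (iteratedDeriv 6 f 1) + (59392/3 : ℝ) * a^9 * (iteratedDeriv 2 f 1)^2 * (iteratedDeriv 4 f 1)^2 + (112960 : ℝ) * a^9 * (iteratedDeriv 2 f 1)^3 + (38912/45 : ℝ) * a^9 * (iteratedDeriv 2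 f 1)^3 * (iteratedDeriv 6 f 1) + (-204416/3 : ℝ) * a^9 * (iteratedDeriv 2 f 1)^3 * (iteratedDeriv 4 f 1) + (-11264/135 : ℝ) * a^9 * (iteratedDeriv 2 f 1)^3 * (iteratedDeriv 4 f 1) * (iteratedDeriv 6 f 1) + (11264/3 : ℝ) * a^9 * (iteratedDeriv 2 f 1)^3 * (iteratedDeriv 4 f 1)^2 + (73280 : ℝ) * a^9 * (iteratedDeriv 2 f 1)^4 + (11264/45 : ℝ) * a^9 * (iteratedDeriv 2 f 1)^4 * (iteratedDeriv 6 f 1) + (-61952/3 : ℝ) * a^9 * (iteratedDeriv 2 f 1)^4 * (iteratedDeriv 4 f 1) + (28160 : ℝ) * a^9 * (iteratedDeriv 2 f 1)^5 + (-4096/30375 : ℝ) * a^10 * (iteratedDeriv 6 f 1)^3 + (114176/6075 : ℝ) * a^10 * (iteratedDeriv 4 f 1) * (iteratedDeriv 6 f 1)^2 + (-23552/27 : ℝ) * a^10 * (iteratedDeriv 4 f 1)^2 * (iteratedDeriv 6 f 1) + (40448/3 : ℝ) * a^10 * (iteratedDeriv 4 f 1)^3 + (-95744/2025 : ℝ)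 * a^10 * (iteratedDeriv 2 f 1) * (iteratedDeriv 6 f 1)^2 + (592384/135 : ℝ) * a^10 * (iteratedDeriv 2 f 1) * (iteratedDeriv 4 f 1) * (iteratedDeriv 6 f 1) + (1024/405 : ℝ) * a^10 * (iteratedDeriv 2 f 1) * (iteratedDeriv 4 f 1) * (iteratedDeriv 6 f 1)^2 + (-305152/3 : ℝ) * a^10 * (iteratedDeriv 2 f 1) * (iteratedDeriv 4 f 1)^2 + (-2048/9 : ℝ) * a^10 * (iteratedDeriv 2 f 1) * (iteratedDeriv 4 f 1)^2 * (iteratedDeriv 6 f 1) + (5120 : ℝ) * a^10 * (iteratedDeriv 2 f 1) * (iteratedDeriv 4 f 1)^3 + (-49664/9 : ℝ) * a^10 * (iteratedDeriv 2 f 1)^2 * (iteratedDeriv 6 f 1) + (-19712/2025 : ℝ) * a^10 * (iteratedDeriv 2 f 1)^2 * (iteratedDeriv 6 f 1)^2 + (767360/3 : ℝ) * a^10 * (iteratedDeriv 2 f 1)^2 * (iteratedDeriv 4 f 1) + (65024/45 : ℝ) * a^10 * (iteratedDeriv 2 f 1)^2 * (iteratedDeriv 4 f 1) * (iteratedDeriv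 6 f 1) + (-45312 : ℝ) * a^10 * (iteratedDeriv 2 f 1)^2 * (iteratedDeriv 4 f 1)^2 + (-214400 : ℝ) * a^10 * (iteratedDeriv 2 f 1)^3 + (-19712/9 : ℝ) * a^10 * (iteratedDeriv 2 f 1)^3 * (iteratedDeriv 6 f 1) + (-11264/2025 : ℝ) * a^10 * (iteratedDeriv 2 f 1)^3 * (iteratedDeriv 6 f 1)^2 + (130560 : ℝ) * a^10 * (iteratedDeriv 2 f 1)^3 * (iteratedDeriv 4 f 1) + (22528/45 : ℝ) * a^10 * (iteratedDeriv 2 f 1)^3 * (iteratedDeriv 4 f 1) * (iteratedDeriv 6 f 1) + (-11264 : ℝ) * a^10 * (iteratedDeriv 2 f 1)^3 * (iteratedDeriv 4 f 1)^2 + (-123200 : ℝ) * a^10 * (iteratedDeriv 2 f 1)^4 + (-11264/9 : ℝ) * a^10 * (iteratedDeriv 2 f 1)^4 * (iteratedDeriv 6 f 1) + (56320 : ℝ) * a^10 * (iteratedDeriv 2 f 1)^4 * (iteratedDeriv 4 f 1) + (-70400 : ℝ) * a^10 * (iteratedDeriv 2 f 1)^5 + (-4096/30375 : ℝ) * a^11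 * (iteratedDeriv 6 f 1)^3 + (114176/6075 : ℝ) * a^11 * (iteratedDeriv 4 f 1) * (iteratedDeriv 6 f 1)^2 + (-23552/27 : ℝ) * a^11 * (iteratedDeriv 4 f 1)^2 * (iteratedDeriv 6 f 1) + (40448/3 : ℝ) * a^11 * (iteratedDeriv 4 f 1)^3 + (-95744/2025 : ℝ) * a^11 * (iteratedDeriv 2 f 1) * (iteratedDeriv 6 f 1)^2 + (592384/135 : ℝ) * a^11 * (iteratedDeriv 2 f 1) * (iteratedDeriv 4 f 1) * (iteratedDeriv 6 f 1) + (1024/405 : ℝ) * a^11 * (iteratedDeriv 2 f 1) * (iteratedDeriv 4 f 1) * (iteratedDeriv 6 f 1)^2 + (-305152/3 : ℝ) * a^11 * (iteratedDeriv 2 f 1) * (iteratedDeriv 4 f 1)^2 + (-2048/9 : ℝ) * a^11 * (iteratedDeriv 2 f 1) * (iteratedDeriv 4 f 1)^2 * (iteratedDeriv 6 f 1) + (5120 : ℝ) * a^11 * (iteratedDeriv 2 f 1) * (iteratedDeriv 4 f 1)^3 + (-49664/9 : ℝ) * a^11 * (iteratedDeriv 2 f 1)^2 * (iteratedDeriv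 6 f 1) + (-19712/2025 : ℝ) * a^11 * (iteratedDeriv 2 f 1)^2 * (iteratedDeriv 6 f 1)^2 + (767360/3 : ℝ) * a^11 * (iteratedDeriv 2 f 1)^2 * (iteratedDeriv 4 f 1) + (65024/45 : ℝ) * a^11 * (iteratedDeriv 2 f 1)^2 * (iteratedDeriv 4 f 1) * (iteratedDeriv 6 f 1) + (-45312 : ℝ) * a^11 * (iteratedDeriv 2 f 1)^2 * (iteratedDeriv 4 f 1)^2 + (-214400 : ℝ) * a^11 * (iteratedDeriv 2 f 1)^3 + (-19712/9 : ℝ) * a^11 * (iteratedDeriv 2 f 1)^3 * (iteratedDeriv 6 f 1) + (-11264/2025 : ℝ) * a^11 * (iteratedDeriv 2 f 1)^3 * (iteratedDeriv 6 f 1)^2 + (130560 : ℝ) * a^11 * (iteratedDeriv 2 f 1)^3 * (iteratedDeriv 4 f 1) + (22528/45 : ℝ) * a^11 * (iteratedDeriv 2 f 1)^3 * (iteratedDeriv 4 f 1) * (iteratedDeriv 6 f 1) + (-11264 : ℝ) * a^11 * (iteratedDeriv 2 f 1)^3 * (iteratedDeriv 4 f 1)^2 + (-123200 : ℝ) * a^11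 * (iteratedDeriv 2 f 1)^4 + (-11264/9 : ℝ) * a^11 * (iteratedDeriv 2 f 1)^4 * (iteratedDeriv 6 f 1) + (56320 : ℝ) * a^11 * (iteratedDeriv 2 f 1)^4 * (iteratedDeriv 4 f 1) + (-70400 : ℝ) * a^11 * (iteratedDeriv 2 f 1)^5

noncomputable def A0f (f : ℝ → ℝ) (a : ℝ) : ℝ := (-4 : ℝ) * (R0f f a) + (4 : ℝ) * (R0f f a)^2 + (-8 : ℝ) * (T0f f a) + (12 : ℝ) * (T0f f a) * (R0f f a) + (12 : ℝ) * (T0f f a)^2 + (12 : ℝ) * a * (R1f f a) + (-4 : ℝ) * a * (R0f f a) + (4 : ℝ) * a * (R0f f a)^2 + (12 : ℝ) * a * (T1f f a) + (-8 : ℝ) * a * (T0f f a) + (12 : ℝ) * a * (T0f f a) * (R0f f a) + (12 : ℝ) * a * (T0f f a)^2 + (4 : ℝ) * a^2 * (R2f f a) + (12 : ℝ) * a^2 * (R1f f a) + (12 : ℝ) * a^2 * (R0f f a) + (-2 : ℝ) * a^2 * (R0f f a) * (Pf f a) + (4 : ℝ) * a^2 * (T2f f a) + (12 : ℝ) * a^2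 * (T1f f a) + (24 : ℝ) * a^2 * (T0f f a) + (-4 : ℝ) * a^2 * (T0f f a) * (Pf f a) + (4 : ℝ) * a^3 * (R2f f a) + (-16 : ℝ) * a^3 * (R1f f a) + (12 : ℝ) * a^3 * (R0f f a) + (-2 : ℝ) * a^3 * (R0f f a) * (Pf f a) + (4 : ℝ) * a^3 * (T2f f a) + (-16 : ℝ) * a^3 * (T1f f a) + (24 : ℝ) * a^3 * (T0f f a) + (-4 : ℝ) * a^3 * (T0f f a) * (Pf f a) + (-4 : ℝ) * a^4 * (R2f f a) + (-16 : ℝ) * a^4 * (R1f f a) + (-4 : ℝ) * a^4 * (T2f f a) + (-16 : ℝ) * a^4 * (T1f f a) + (-4 : ℝ) * a^5 * (R2f f a) + (-4 : ℝ) * a^5 * (T2f f a)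

noncomputable def B1f (f : ℝ → ℝ) (a : ℝ) : ℝ := (12 : ℝ) * (T0f f a) + (-7 : ℝ) * a * (R1f f a) + (-14 : ℝ) * a * (T1f f a) + (12 : ℝ) * a * (T0f f a) + (-7 : ℝ) * a^2 * (R1f f a) + (-14 : ℝ) * a^2 * (T1f f a) + (-16 : ℝ) * a^2 * (T0f f a) + (7 : ℝ) * a^3 * (R1f f a) + (14 : ℝ) * a^3 * (T1f f a) + (-16 : ℝ) * a^3 * (T0f f a) + (7 : ℝ) * a^4 * (R1f f a) + (14 : ℝ) * a^4 * (T1f f a)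

noncomputable def B2f (f : ℝ → ℝ) (a : ℝ) : ℝ := (4 : ℝ) * (T0f f a) + (4 : ℝ) * a * (T0f f a) + (-4 : ℝ) * a^2 * (T0f f a) + (-4 : ℝ) * a^3 * (T0f f a)

variable {f : ℝ → ℝ}

lemma iter_contDiffOn (hf : ContDiffOn ℝ (⊤ : ℕ∞) f (Set.Ioi 0)) (j : ℕ) :
    ContDiffOn ℝ (⊤ : ℕ∞) (iteratedDeriv j f) (Set.Ioi 0) := by
  induction j with
  | zero => simpa [iteratedDeriv_zero] using hf
  | succ n ih => rw [iteratedDeriv_succ]; exact ih.deriv_of_isOpen isOpen_Ioi (by simp)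

lemma iter_hasDerivAt (hf : ContDiffOn ℝ (⊤ : ℕ∞) f (Set.Ioi 0)) (j : ℕ) {x : ℝ} (hx : 0 < x) :
    HasDerivAt (iteratedDeriv j f) (iteratedDeriv (j+1) f x) x := by
  have h1 : DifferentiableAt ℝ (iteratedDeriv j f) x :=
    ((iter_contDiffOn hf j).differentiableOn (by simp)).differentiableAt (isOpen_Ioi.mem_nhds hx)
  rw [iteratedDeriv_succ]
  exact h1.hasDerivAt

lemma mem_c {x : ℝ} (hx : x ∈ Set.Ioo (-1:ℝ) 1) : (0:ℝ) < (1-x)/(1+x) :=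
  div_pos (by linarith [hx.2]) (by linarith [hx.1])

lemma uf_hasDerivAt (hf : ContDiffOn ℝ (⊤ : ℕ∞) f (Set.Ioi 0)) (j : ℕ) {x : ℝ}
    (hx : x ∈ Set.Ioo (-1:ℝ) 1) :
    HasDerivAt (uf f j) (-2/(1+x)^2 * uf f (j+1) x) x := by
  have h1 : (0:ℝ) < 1 + x := by linarith [hx.1]
  have hc : HasDerivAt (fun a : ℝ => (1-a)/(1+a)) (-2/(1+x)^2) x := by
    have h := ((hasDerivAt_id' x).const_sub 1).div ((hasDerivAt_id' x).const_add 1) h1.ne'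
    refine h.congr_deriv ?_
    field_simp
    ring
  have h2 : HasDerivAt (uf f j)
      (iteratedDeriv (j+1) f ((1-x)/(1+x)) * (-2/(1+x)^2)) x :=
    HasDerivAt.comp x (iter_hasDerivAt hf j (mem_c hx)) hc
  convert h2 using 1
  unfold uf
  ring

lemma hb (hf : ContDiffOn ℝ (⊤ : ℕ∞) f (Set.Ioi 0)) (c : ℝ) (j n : ℕ) {x : ℝ}
    (hx : x ∈ Set.Ioo (-1:ℝ) 1) :
    HasDerivAt (fun a => c * uf f j a / (1+a)^n)
      (-2*c * uf f (j+1) x / (1+x)^(n+2) - (n:ℝ)*c * uf f j x / (1+x)^(n+1)) x := by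
  have h1 : (0:ℝ) < 1 + x := by linarith [hx.1]
  have hpow : HasDerivAt (fun a : ℝ => (1+a)^n) ((n:ℝ)*(1+x)^(n-1)) x := by
    exact ((hasDerivAt_pow n (1+x)).comp x ((hasDerivAt_id' x).const_add 1)).congr_deriv (mul_one _)
  have hnum := (uf_hasDerivAt hf j hx).const_mul c
  have h := hnum.div hpow (pow_ne_zero n h1.ne')
  refine h.congr_deriv ?_
  rcases n with _|m
  · simp
    ring
  · push_cast
    field_simp
    ring

lemma hasDerivAt_poly7 (c0 c1 c2 c3 c4 c5 c6 c7 x : ℝ) :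
    HasDerivAt (fun a : ℝ => c0 + c1*a^1 + c2*a^2 + c3*a^3 + c4*a^4 + c5*a^5 + c6*a^6 + c7*a^7)
      (c1 + 2*c2*x^1 + 3*c3*x^2 + 4*c4*x^3 + 5*c5*x^4 + 6*c6*x^5 + 7*c7*x^6) x := by
  have h := (((((((hasDerivAt_const x c0).add ((hasDerivAt_pow 1 x).const_mul c1)).add
    ((hasDerivAt_pow 2 x).const_mul c2)).add ((hasDerivAt_pow 3 x).const_mul c3)).add
    ((hasDerivAt_pow 4 x).const_mul c4)).add ((hasDerivAt_pow 5 x).const_mul c5)).add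
    ((hasDerivAt_pow 6 x).const_mul c6)).add ((hasDerivAt_pow 7 x).const_mul c7)
  refine h.congr_deriv ?_
  push_cast
  ring

lemma even_step {h h' : ℝ → ℝ} {ε : ℝ}
    (hd : ∀ x ∈ Set.Ioo (-1:ℝ) 1, HasDerivAt h (h' x) x)
    (he : ∀ x ∈ Set.Ioo (-1:ℝ) 1, h (-x) = ε * h x) :
    ∀ x ∈ Set.Ioo (-1:ℝ) 1, h' (-x) = -ε * h' x := by
  intro x hx
  have hx' : -x ∈ Set.Ioo (-1:ℝ) 1 := ⟨by linarith [hx.2], by linarith [hx.1]⟩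
  have H1 : HasDerivAt (fun y : ℝ => h (-y)) (h' (-x) * (-1)) x :=
    HasDerivAt.comp x (hd _ hx') (hasDerivAt_neg x)
  have H2 : HasDerivAt (fun y : ℝ => ε * h y) (ε * h' x) x := (hd x hx).const_mul ε
  have heq : (fun y : ℝ => h (-y)) =ᶠ[𝓝 x] fun y : ℝ => ε * h y := by
    filter_upwards [isOpen_Ioo.mem_nhds hx] with y hy using he y hy
  have H3 : HasDerivAt (fun y : ℝ => h (-y)) (ε * h' x) x :=
    H2.congr_of_eventuallyEq heq
  have := H1.unique H3
  linarith [this]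

lemma bigO_step {g g' : ℝ → ℝ} {n : ℕ}
    (h0 : g 0 = 0)
    (hd : ∀ x ∈ Set.Ioo (-1:ℝ) 1, HasDerivAt g (g' x) x)
    (hO : g' =O[𝓝 (0:ℝ)] fun x => x ^ n) :
    g =O[𝓝 (0:ℝ)] fun x => x ^ (n+1) := by
  rcases hO.exists_pos with ⟨C, hCpos, hC⟩
  rw [isBigOWith_iff] at hC
  rcases Metric.eventually_nhds_iff.mp hC with ⟨ε, hε, hball⟩
  set δ := min (ε/2) (1/2) with hδ
  have hδpos : 0 < δ := by positivity
  rw [isBigO_iff]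
  refine ⟨C, ?_⟩
  filter_upwards [Metric.ball_mem_nhds (0:ℝ) hδpos] with x hx
  rw [Metric.mem_ball, Real.dist_eq, sub_zero] at hx
  have habs : ∀ y ∈ Set.uIcc (0:ℝ) x, |y| ≤ |x| := by
    intro y hy
    rcases Set.mem_uIcc.mp hy with ⟨hy1, hy2⟩ | ⟨hy1, hy2⟩ <;> rw [abs_le] <;>
      constructor <;> linarith [le_abs_self x, neg_abs_le x]
  have hmem : ∀ y ∈ Set.uIcc (0:ℝ) x, y ∈ Set.Ioo (-1:ℝ) 1 := by
    intro y hy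
    have h1 := habs y hy
    have h2 : |x| < 1/2 := lt_of_lt_of_le hx (min_le_right _ _)
    have := abs_lt.mp (lt_of_le_of_lt h1 h2)
    exact ⟨by linarith [this.1], by linarith [this.2]⟩
  have hbound : ∀ y ∈ Set.uIcc (0:ℝ) x, ‖g' y‖ ≤ C * |x|^n := by
    intro y hy
    have h1 : dist y 0 < ε := by
      rw [Real.dist_eq, sub_zero]
      have := habs y hy
      have h2 : |x| < ε/2 := lt_of_lt_of_le hx (min_le_left _ _)
      linarith
    have h2 := hball h1
    rw [Real.norm_eq_abs, Real.norm_eq_abs, abs_pow] at h2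
    rw [Real.norm_eq_abs]
    calc |g' y| ≤ C * |y|^n := h2
    _ ≤ C * |x|^n := by
        apply mul_le_mul_of_nonneg_left (pow_le_pow_left₀ (abs_nonneg y) (habs y hy) n) hCpos.le
  have key := Convex.norm_image_sub_le_of_norm_hasDerivWithin_le
    (fun y hy => (hd y (hmem y hy)).hasDerivWithinAt) hbound (convex_uIcc 0 x)
    Set.left_mem_uIcc Set.right_mem_uIcc
  rw [h0, sub_zero, sub_zero] at key
  rw [Real.norm_eq_abs, Real.norm_eq_abs, abs_pow, pow_succ]
  calc ‖g x‖ ≤ C * |x|^n * ‖x‖ := key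
  _ = C * (|x|^n * |x|) := by rw [Real.norm_eq_abs]; ring

lemma hG0 (hf : ContDiffOn ℝ (⊤ : ℕ∞) f (Set.Ioi 0)) {x : ℝ} (hx : x ∈ Set.Ioo (-1:ℝ) 1) :
    HasDerivAt (Gf f) (G1f f x) x := by
  have h1 : (0:ℝ) < 1 + x := by linarith [hx.1]
  unfold Gf G1f
  refine (((hasDerivAt_id' x).const_add 1).mul (uf_hasDerivAt hf 0 hx)).congr_deriv ?_
  field_simp

lemma hG1 (hf : ContDiffOn ℝ (⊤ : ℕ∞) f (Set.Ioi 0)) {x : ℝ} (hx : x ∈ Set.Ioo (-1:ℝ) 1) :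
    HasDerivAt (G1f f) (G2f f x) x := by
  have h1 : (0:ℝ) < 1 + x := by linarith [hx.1]
  unfold G1f G2f
  refine ((hb hf (1) 0 0 hx).add (hb hf (-2) 1 1 hx)).congr_deriv ?_
  push_cast
  ring

lemma hG2 (hf : ContDiffOn ℝ (⊤ : ℕ∞) f (Set.Ioi 0)) {x : ℝ} (hx : x ∈ Set.Ioo (-1:ℝ) 1) :
    HasDerivAt (G2f f) (G3f f x) x := by
  have h1 : (0:ℝ) < 1 + x := by linarith [hx.1]
  unfold G2f G3f
  refine (hb hf (4) 2 3 hx).congr_deriv ?_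
  push_cast
  ring

lemma hG3 (hf : ContDiffOn ℝ (⊤ : ℕ∞) f (Set.Ioi 0)) {x : ℝ} (hx : x ∈ Set.Ioo (-1:ℝ) 1) :
    HasDerivAt (G3f f) (G4f f x) x := by
  have h1 : (0:ℝ) < 1 + x := by linarith [hx.1]
  unfold G3f G4f
  refine ((hb hf (-12) 2 4 hx).add (hb hf (-8) 3 5 hx)).congr_deriv ?_
  push_cast
  ring

lemma hG4 (hf : ContDiffOn ℝ (⊤ : ℕ∞) f (Set.Ioi 0)) {x : ℝ} (hx : x ∈ Set.Ioo (-1:ℝ) 1) :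
    HasDerivAt (G4f f) (G5f f x) x := by
  have h1 : (0:ℝ) < 1 + x := by linarith [hx.1]
  unfold G4f G5f
  refine (((hb hf (48) 2 5 hx).add (hb hf (64) 3 6 hx)).add (hb hf (16) 4 7 hx)).congr_deriv ?_
  push_cast
  ring

lemma hG5 (hf : ContDiffOn ℝ (⊤ : ℕ∞) f (Set.Ioi 0)) {x : ℝ} (hx : x ∈ Set.Ioo (-1:ℝ) 1) :
    HasDerivAt (G5f f) (G6f f x) x := by
  have h1 : (0:ℝ) < 1 + x := by linarith [hx.1]
  unfold G5f G6f
  refine ((((hb hf (-240) 2 6 hx).add (hb hf (-480) 3 7 hx)).add (hb hf (-240) 4 8 hx)).add (hb hf (-32) 5 9 hx)).congr_deriv ?_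
  push_cast
  ring

lemma hG6 (hf : ContDiffOn ℝ (⊤ : ℕ∞) f (Set.Ioi 0)) {x : ℝ} (hx : x ∈ Set.Ioo (-1:ℝ) 1) :
    HasDerivAt (G6f f) (G7f f x) x := by
  have h1 : (0:ℝ) < 1 + x := by linarith [hx.1]
  unfold G6f G7f
  refine (((((hb hf (1440) 2 7 hx).add (hb hf (3840) 3 8 hx)).add (hb hf (2880) 4 9 hx)).add (hb hf (768) 5 10 hx)).add (hb hf (64) 6 11 hx)).congr_deriv ?_
  push_cast
  ring

lemma hG7 (hf : ContDiffOn ℝ (⊤ : ℕ∞) f (Set.Ioi 0)) {x : ℝ} (hx : x ∈ Set.Ioo (-1:ℝ) 1) :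
    HasDerivAt (G7f f) (G8f f x) x := by
  have h1 : (0:ℝ) < 1 + x := by linarith [hx.1]
  unfold G7f G8f
  refine ((((((hb hf (-10080) 2 8 hx).add (hb hf (-33600) 3 9 hx)).add (hb hf (-33600) 4 10 hx)).add (hb hf (-13440) 5 11 hx)).add (hb hf (-2240) 6 12 hx)).add (hb hf (-128) 7 13 hx)).congr_deriv ?_
  push_cast
  ring

lemma hG8 (hf : ContDiffOn ℝ (⊤ : ℕ∞) f (Set.Ioi 0)) {x : ℝ} (hx : x ∈ Set.Ioo (-1:ℝ) 1) :
    HasDerivAt (G8f f) (G9f f x) x := by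
  have h1 : (0:ℝ) < 1 + x := by linarith [hx.1]
  unfold G8f G9f
  refine (((((((hb hf (80640) 2 9 hx).add (hb hf (322560) 3 10 hx)).add (hb hf (403200) 4 11 hx)).add (hb hf (215040) 5 12 hx)).add (hb hf (53760) 6 13 hx)).add (hb hf (6144) 7 14 hx)).add (hb hf (256) 8 15 hx)).congr_deriv ?_
  push_cast
  ring

lemma G1val : G1f f 0 = (1) * iteratedDeriv 0 f 1 + (-2) * iteratedDeriv 1 f 1 := by
  unfold G1f uf
  norm_num

lemma G2val : G2f f 0 = (4) * iteratedDeriv 2 f 1 := by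
  unfold G2f uf
  norm_num

lemma G3val : G3f f 0 = (-12) * iteratedDeriv 2 f 1 + (-8) * iteratedDeriv 3 f 1 := by
  unfold G3f uf
  norm_num

lemma G4val : G4f f 0 = (48) * iteratedDeriv 2 f 1 + (64) * iteratedDeriv 3 f 1 + (16) * iteratedDeriv 4 f 1 := by
  unfold G4f uf
  norm_num

lemma G5val : G5f f 0 = (-240) * iteratedDeriv 2 f 1 + (-480) * iteratedDeriv 3 f 1 + (-240) * iteratedDeriv 4 f 1 + (-32) * iteratedDeriv 5 f 1 := by
  unfold G5f uf
  norm_num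

lemma G6val : G6f f 0 = (1440) * iteratedDeriv 2 f 1 + (3840) * iteratedDeriv 3 f 1 + (2880) * iteratedDeriv 4 f 1 + (768) * iteratedDeriv 5 f 1 + (64) * iteratedDeriv 6 f 1 := by
  unfold G6f uf
  norm_num

lemma G0val (hf1 : f 1 = 1) : Gf f 0 = 1 := by
  unfold Gf uf
  norm_num [iteratedDeriv_zero, hf1]

lemma Gf_even (hsym : ∀ x > (0:ℝ), f x = x * f (1/x)) :
    ∀ x ∈ Set.Ioo (-1:ℝ) 1, Gf f (-x) = 1 * Gf f x := by
  intro x hx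
  have h1 : (0:ℝ) < 1 + x := by linarith [hx.1]
  have h2 : (0:ℝ) < 1 - x := by linarith [hx.2]
  have hc : (0:ℝ) < (1+x)/(1-x) := div_pos h1 h2
  have hs := hsym _ hc
  have e1 : 1/((1+x)/(1-x)) = (1-x)/(1+x) := one_div_div _ _
  unfold Gf uf
  simp only [iteratedDeriv_zero]
  rw [show (1 - -x)/(1 + -x) = (1+x)/(1-x) by ring, hs, e1]
  field_simp
  ring

lemma hR0 (hf : ContDiffOn ℝ (⊤ : ℕ∞) f (Set.Ioi 0)) {x : ℝ} (hx : x ∈ Set.Ioo (-1:ℝ) 1) :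
    HasDerivAt (R0f f) (R1f f x) x := by
  have h := (hG0 hf hx).sub (hasDerivAt_poly7 ((1 : ℝ)) ((0 : ℝ)) ((2 : ℝ) * (iteratedDeriv 2 f 1)) ((0 : ℝ)) ((2/3 : ℝ) * (iteratedDeriv 4 f 1) + (-2 : ℝ) * (iteratedDeriv 2 f 1)) ((0 : ℝ)) ((4/45 : ℝ) * (iteratedDeriv 6 f 1) + (-4 : ℝ) * (iteratedDeriv 4 f 1) + (10 : ℝ) * (iteratedDeriv 2 f 1)) ((0 : ℝ)) x)
  unfold R0f R1f T0f T1f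
  refine h.congr_deriv ?_
  ring

lemma hR1 (hf : ContDiffOn ℝ (⊤ : ℕ∞) f (Set.Ioi 0)) {x : ℝ} (hx : x ∈ Set.Ioo (-1:ℝ) 1) :
    HasDerivAt (R1f f) (R2f f x) x := by
  have h := (hG1 hf hx).sub (hasDerivAt_poly7 ((0 : ℝ)) ((4 : ℝ) * (iteratedDeriv 2 f 1)) ((0 : ℝ)) ((8/3 : ℝ) * (iteratedDeriv 4 f 1) + (-8 : ℝ) * (iteratedDeriv 2 f 1)) ((0 : ℝ)) ((8/15 : ℝ) * (iteratedDeriv 6 f 1) + (-24 : ℝ) * (iteratedDeriv 4 f 1) + (60 : ℝ) * (iteratedDeriv 2 f 1)) ((0 : ℝ)) ((0 : ℝ)) x)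
  unfold R1f R2f T1f T2f
  refine h.congr_deriv ?_
  ring

lemma hR2 (hf : ContDiffOn ℝ (⊤ : ℕ∞) f (Set.Ioi 0)) {x : ℝ} (hx : x ∈ Set.Ioo (-1:ℝ) 1) :
    HasDerivAt (R2f f) (R3f f x) x := by
  have h := (hG2 hf hx).sub (hasDerivAt_poly7 ((4 : ℝ) * (iteratedDeriv 2 f 1)) ((0 : ℝ)) ((8 : ℝ) * (iteratedDeriv 4 f 1) + (-24 : ℝ) * (iteratedDeriv 2 f 1)) ((0 : ℝ)) ((8/3 : ℝ) * (iteratedDeriv 6 f 1) + (-120 : ℝ) * (iteratedDeriv 4 f 1) + (300 : ℝ) * (iteratedDeriv 2 f 1)) ((0 : ℝ)) ((0 : ℝ)) ((0 : ℝ)) x)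
  unfold R2f R3f T2f T3f
  refine h.congr_deriv ?_
  ring

lemma hR3 (hf : ContDiffOn ℝ (⊤ : ℕ∞) f (Set.Ioi 0)) {x : ℝ} (hx : x ∈ Set.Ioo (-1:ℝ) 1) :
    HasDerivAt (R3f f) (R4f f x) x := by
  have h := (hG3 hf hx).sub (hasDerivAt_poly7 ((0 : ℝ)) ((16 : ℝ) * (iteratedDeriv 4 f 1) + (-48 : ℝ) * (iteratedDeriv 2 f 1)) ((0 : ℝ)) ((32/3 : ℝ) * (iteratedDeriv 6 f 1) + (-480 : ℝ) * (iteratedDeriv 4 f 1) + (1200 : ℝ) * (iteratedDeriv 2 f 1)) ((0 : ℝ)) ((0 : ℝ)) ((0 : ℝ)) ((0 : ℝ)) x)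
  unfold R3f R4f T3f T4f
  refine h.congr_deriv ?_
  ring

lemma hR4 (hf : ContDiffOn ℝ (⊤ : ℕ∞) f (Set.Ioi 0)) {x : ℝ} (hx : x ∈ Set.Ioo (-1:ℝ) 1) :
    HasDerivAt (R4f f) (R5f f x) x := by
  have h := (hG4 hf hx).sub (hasDerivAt_poly7 ((16 : ℝ) * (iteratedDeriv 4 f 1) + (-48 : ℝ) * (iteratedDeriv 2 f 1)) ((0 : ℝ)) ((32 : ℝ) * (iteratedDeriv 6 f 1) + (-1440 : ℝ) * (iteratedDeriv 4 f 1) + (3600 : ℝ) * (iteratedDeriv 2 f 1)) ((0 : ℝ)) ((0 : ℝ)) ((0 : ℝ)) ((0 : ℝ)) ((0 : ℝ)) x)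
  unfold R4f R5f T4f T5f
  refine h.congr_deriv ?_
  ring

lemma hR5 (hf : ContDiffOn ℝ (⊤ : ℕ∞) f (Set.Ioi 0)) {x : ℝ} (hx : x ∈ Set.Ioo (-1:ℝ) 1) :
    HasDerivAt (R5f f) (R6f f x) x := by
  have h := (hG5 hf hx).sub (hasDerivAt_poly7 ((0 : ℝ)) ((64 : ℝ) * (iteratedDeriv 6 f 1) + (-2880 : ℝ) * (iteratedDeriv 4 f 1) + (7200 : ℝ) * (iteratedDeriv 2 f 1)) ((0 : ℝ)) ((0 : ℝ)) ((0 : ℝ)) ((0 : ℝ)) ((0 : ℝ)) ((0 : ℝ)) x)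
  unfold R5f R6f T5f T6f
  refine h.congr_deriv ?_
  ring

lemma hR6 (hf : ContDiffOn ℝ (⊤ : ℕ∞) f (Set.Ioi 0)) {x : ℝ} (hx : x ∈ Set.Ioo (-1:ℝ) 1) :
    HasDerivAt (R6f f) (R7f f x) x := by
  have h := (hG6 hf hx).sub (hasDerivAt_poly7 ((64 : ℝ) * (iteratedDeriv 6 f 1) + (-2880 : ℝ) * (iteratedDeriv 4 f 1) + (7200 : ℝ) * (iteratedDeriv 2 f 1)) ((0 : ℝ)) ((0 : ℝ)) ((0 : ℝ)) ((0 : ℝ)) ((0 : ℝ)) ((0 : ℝ)) ((0 : ℝ)) x)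
  unfold R6f R7f T6f
  refine h.congr_deriv ?_
  ring
lemma scurv_eq (hpos : ∀ x > (0:ℝ), 0 < f x) {a : ℝ} (ha : a ∈ Set.Ioo (-1:ℝ) 1)
    (h0 : a ≠ 0) :
    scurv f a - Pf f a = PSf f a * (a^2)⁻¹ * (2*(1+a)*(Gf f a)^2)⁻¹ := by
  have h1 : (0:ℝ) < 1 + a := by linarith [ha.1]
  have h1' : (1:ℝ) + a ≠ 0 := h1.ne'
  have h2 : (0:ℝ) < (1-a)/(1+a) := mem_c ha
  have h3 : f ((1-a)/(1+a)) ≠ 0 := (hpos _ h2).ne'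
  unfold scurv PSf Gf G1f G2f uf
  simp only [iteratedDeriv_zero, iteratedDeriv_one]
  field_simp
  ring

lemma key_identity (f : ℝ → ℝ) (a : ℝ) :
    PSf f a = a^8 * Qf f a + R0f f a * A0f f a + a * (R1f f a) * B1f f a
      + a^2 * (R2f f a) * B2f f a := by
  unfold PSf Qf A0f B1f B2f R0f R1f R2f T0f T1f T2f Pf
  ring

end Aux

/-- the series expansion of the scalar curvature `r(a)` at the
origin, up to order `O(a⁶)`. -/
theorem stmt_6 (f : ℝ → ℝ)
    (hf : ContDiffOn ℝ (⊤ : ℕ∞) f (Set.Ioi 0))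
    (hpos : ∀ x > (0:ℝ), 0 < f x)
    (hf1 : f 1 = 1)
    (hsym : ∀ x > (0:ℝ), f x = x * f (1/x)) :
    (fun a : ℝ => scurv f a -
      ((6 + 36 * iteratedDeriv 2 f 1)
        + a^2 * ((100/3) * iteratedDeriv 4 f 1 - 140 * iteratedDeriv 2 f 1
            - 120 * (iteratedDeriv 2 f 1)^2)
        + a^4 * (352 * (iteratedDeriv 2 f 1)^3 + 616 * (iteratedDeriv 2 f 1)^2
            + 1092 * iteratedDeriv 2 f 1 - (1288/3) * iteratedDeriv 4 f 1
            + (392/45) * iteratedDeriv 6 f 1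
            - 160 * iteratedDeriv 2 f 1 * iteratedDeriv 4 f 1)))
      =O[𝓝[≠] (0:ℝ)] (fun a => a^6) := by
  have h0mem : (0:ℝ) ∈ Set.Ioo (-1:ℝ) 1 := by norm_num
  -- evenness chain
  have ev0 := Gf_even (f := f) hsym
  have ev1 := even_step (fun x hx => hG0 hf hx) ev0
  have ev2 := even_step (fun x hx => hG1 hf hx) ev1
  have ev3 := even_step (fun x hx => hG2 hf hx) ev2
  have ev4 := even_step (fun x hx => hG3 hf hx) ev3
  have ev5 := even_step (fun x hx => hG4 hf hx) ev4
  have ev6 := even_step (fun x hx => hG5 hf hx) ev5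
  have ev7 := even_step (fun x hx => hG6 hf hx) ev6
  have z1 : G1f f 0 = 0 := by have := ev1 0 h0mem; norm_num at this; linarith
  have z3 : G3f f 0 = 0 := by have := ev3 0 h0mem; norm_num at this; linarith
  have z5 : G5f f 0 = 0 := by have := ev5 0 h0mem; norm_num at this; linarith
  have z7 : G7f f 0 = 0 := by have := ev7 0 h0mem; norm_num at this; linarith
  -- values of the remainder functions at 0
  have h3 := z3; rw [G3val] at h3
  have h5 := z5; rw [G5val] at h5
  have hR0z : R0f f 0 = 0 := by unfold R0f T0f; rw [G0val hf1]; norm_num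
  have hR1z : R1f f 0 = 0 := by unfold R1f T1f; rw [z1]; norm_num
  have hR2z : R2f f 0 = 0 := by unfold R2f T2f; rw [G2val]; norm_num
  have hR3z : R3f f 0 = 0 := by unfold R3f T3f; rw [z3]; norm_num
  have hR4z : R4f f 0 = 0 := by
    unfold R4f T4f; rw [G4val]; ring_nf; linarith [h3]
  have hR5z : R5f f 0 = 0 := by unfold R5f T5f; rw [z5]; norm_num
  have hR6z : R6f f 0 = 0 := by
    unfold R6f T6f; rw [G6val]; ring_nf; linarith [h3, h5]
  have hR7z : R7f f 0 = 0 := by unfold R7f; exact z7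
  -- big-O chain
  have o8 : (G8f f) =O[𝓝 (0:ℝ)] (fun x : ℝ => x^0) := by
    have hcont : ContinuousAt (G8f f) 0 := (hG8 hf h0mem).continuousAt
    have h := hcont.tendsto.isBigO_one (F := ℝ)
    simpa using h
  have o7 : (R7f f) =O[𝓝 (0:ℝ)] (fun x : ℝ => x^1) := by
    simpa using bigO_step (g := R7f f) (g' := G8f f) hR7z (fun x hx => hG7 hf hx) o8
  have o6 : (R6f f) =O[𝓝 (0:ℝ)] (fun x : ℝ => x^2) := by
    simpa using bigO_step (g := R6f f) (g' := R7f f) hR6z (fun x hx => hR6 hf hx) o7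
  have o5 : (R5f f) =O[𝓝 (0:ℝ)] (fun x : ℝ => x^3) := by
    simpa using bigO_step (g := R5f f) (g' := R6f f) hR5z (fun x hx => hR5 hf hx) o6
  have o4 : (R4f f) =O[𝓝 (0:ℝ)] (fun x : ℝ => x^4) := by
    simpa using bigO_step (g := R4f f) (g' := R5f f) hR4z (fun x hx => hR4 hf hx) o5
  have o3 : (R3f f) =O[𝓝 (0:ℝ)] (fun x : ℝ => x^5) := by
    simpa using bigO_step (g := R3f f) (g' := R4f f) hR3z (fun x hx => hR3 hf hx) o4
  have o2 : (R2f f) =O[𝓝 (0:ℝ)] (fun x : ℝ => x^6) := by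
    simpa using bigO_step (g := R2f f) (g' := R3f f) hR2z (fun x hx => hR2 hf hx) o3
  have o1 : (R1f f) =O[𝓝 (0:ℝ)] (fun x : ℝ => x^7) := by
    simpa using bigO_step (g := R1f f) (g' := R2f f) hR1z (fun x hx => hR1 hf hx) o2
  have o0 : (R0f f) =O[𝓝 (0:ℝ)] (fun x : ℝ => x^8) := by
    simpa using bigO_step (g := R0f f) (g' := R1f f) hR0z (fun x hx => hR0 hf hx) o1
  -- continuity facts
  have hcR0 : ContinuousAt (R0f f) 0 := (hR0 hf h0mem).continuousAt
  have hcR1 : ContinuousAt (R1f f) 0 := (hR1 hf h0mem).continuousAt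
  have hcR2 : ContinuousAt (R2f f) 0 := (hR2 hf h0mem).continuousAt
  have hcT0 : ContinuousAt (T0f f) 0 := by unfold T0f; fun_prop
  have hcT1 : ContinuousAt (T1f f) 0 := by unfold T1f; fun_prop
  have hcT2 : ContinuousAt (T2f f) 0 := by unfold T2f; fun_prop
  have hcP : ContinuousAt (Pf f) 0 := by unfold Pf; fun_prop
  have hcA0 : ContinuousAt (A0f f) 0 := by unfold A0f; fun_prop
  have hcB1 : ContinuousAt (B1f f) 0 := by unfold B1f; fun_prop
  have hcB2 : ContinuousAt (B2f f) 0 := by unfold B2f; fun_prop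
  have hcQ : ContinuousAt (Qf f) 0 := by unfold Qf; fun_prop
  have hcG : ContinuousAt (Gf f) 0 := (hG0 hf h0mem).continuousAt
  -- big-O of PSf
  have p1 : (fun a : ℝ => a^8 * Qf f a) =O[𝓝 (0:ℝ)] (fun a : ℝ => a^8) := by
    have h := (isBigO_refl (fun a : ℝ => a^8) (𝓝 (0:ℝ))).mul (hcQ.tendsto.isBigO_one (F := ℝ))
    simpa using h
  have p2 : (fun a : ℝ => R0f f a * A0f f a) =O[𝓝 (0:ℝ)] (fun a : ℝ => a^8) := by
    have h := o0.mul (hcA0.tendsto.isBigO_one (F := ℝ))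
    simpa using h
  have p3 : (fun a : ℝ => a * R1f f a * B1f f a) =O[𝓝 (0:ℝ)] (fun a : ℝ => a^8) := by
    have h := ((isBigO_refl (fun a : ℝ => a) (𝓝 (0:ℝ))).mul o1).mul
      (hcB1.tendsto.isBigO_one (F := ℝ))
    have e : (fun a : ℝ => a * a^7 * 1) = fun a : ℝ => a^8 := by funext a; ring
    rwa [e] at h
  have p4 : (fun a : ℝ => a^2 * R2f f a * B2f f a) =O[𝓝 (0:ℝ)] (fun a : ℝ => a^8) := by
    have h := ((isBigO_refl (fun a : ℝ => a^2) (𝓝 (0:ℝ))).mul o2).mul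
      (hcB2.tendsto.isBigO_one (F := ℝ))
    have e : (fun a : ℝ => a^2 * a^6 * 1) = fun a : ℝ => a^8 := by funext a; ring
    rwa [e] at h
  have hPS : (PSf f) =O[𝓝 (0:ℝ)] (fun a : ℝ => a^8) := by
    have e : PSf f = fun a : ℝ => a^8 * Qf f a + R0f f a * A0f f a
        + a * (R1f f a) * B1f f a + a^2 * (R2f f a) * B2f f a := funext (key_identity f)
    rw [e]
    exact ((p1.add p2).add p3).add p4
  -- denominator
  have hcden : ContinuousAt (fun a : ℝ => 2*(1+a)*(Gf f a)^2) 0 :=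
    (continuousAt_const.mul (continuousAt_const.add continuousAt_id)).mul (hcG.pow 2)
  have hval : (2*(1+(0:ℝ)))*(Gf f 0)^2 = 2 := by rw [G0val hf1]; norm_num
  have hinv : Filter.Tendsto (fun a : ℝ => (2*(1+a)*(Gf f a)^2)⁻¹) (𝓝 0) (𝓝 2⁻¹) := by
    have h := hcden.tendsto
    have e : 2*(1+(0:ℝ))*(Gf f 0)^2 = 2 := by rw [G0val hf1]; norm_num
    rw [e] at h
    exact h.inv₀ (by norm_num)
  have h3O : (fun a : ℝ => (2*(1+a)*(Gf f a)^2)⁻¹) =O[𝓝[≠] (0:ℝ)] (fun _ : ℝ => (1:ℝ)) :=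
    (hinv.isBigO_one (F := ℝ)).mono nhdsWithin_le_nhds
  have hprod := ((hPS.mono nhdsWithin_le_nhds).mul
      (isBigO_refl (fun a : ℝ => (a^2)⁻¹) (𝓝[≠] (0:ℝ)))).mul h3O
  have heq2 : (fun a : ℝ => a^8 * (a^2)⁻¹ * 1) =ᶠ[𝓝[≠] (0:ℝ)] (fun a : ℝ => a^6) := by
    filter_upwards [self_mem_nhdsWithin] with a ha
    have ha' : a ≠ 0 := ha
    field_simp
  have hev : (fun a : ℝ => scurv f a - Pf f a) =ᶠ[𝓝[≠] (0:ℝ)]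
      (fun a : ℝ => PSf f a * (a^2)⁻¹ * (2*(1+a)*(Gf f a)^2)⁻¹) := by
    filter_upwards [mem_nhdsWithin_of_mem_nhds (Ioo_mem_nhds (show (-1:ℝ) < 0 by norm_num) (show (0:ℝ) < 1 by norm_num)),
      self_mem_nhdsWithin] with a ha hne
    exact scurv_eq hpos ha hne
  exact hprod.congr' hev.symm heq2
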